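/- arXiv:2409.13578 — 3 statements merged into one kernel-verified Lean document; each statement's English description precedes it below -/
import Mathlib

section
/- For the Hamiltonian H(I,θ) = Σ_i ω_i I_i − (K_1/N) Σ_{i,j} A_{ij} √(I_i I_j)(I_j − I_i) sin(θ_j − θ_i) − (K_2/N²) Σ_{i,j,k} B_{ijk} (I_i I_j I_k)^{1/3}(I_j + I_k − 2I_i) sin(θ_j + θ_k − 2θ_i), every torus T_c = {(I,θ) : I_i = c for all i} with c > 0 is invariant under the Hamiltonian flow: if I_i = c for all i, then ∂H/∂θ_i = 0 for every i. -/
theorem torus_invariant_higher_order_general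
    (N : ℕ) (ω : Fin N → ℝ) (K1 K2 : ℝ)
    (A : Fin N → Fin N → ℝ) (B : Fin N → Fin N → Fin N → ℝ)
    (H : (Fin N → ℝ) → (Fin N → ℝ) → ℝ)
    (hH : ∀ I θ, H I θ =
      (∑ i, ω i * I i)
      - K1 / (N : ℝ) * ∑ i, ∑ j, A i j * Real.sqrt (I i * I j) * (I j - I i)
          * Real.sin (θ j - θ i)
      - K2 / (N : ℝ) ^ 2 * ∑ i, ∑ j, ∑ k, B i j k * (I i * I j * I k) ^ ((1 : ℝ) / 3)
          * (I j + I k - 2 * I i) * Real.sin (θ j + θ k - 2 * θ i))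
    (c : ℝ) (θ : Fin N → ℝ) (i : Fin N) :
    HasDerivAt (fun t => H (fun _ => c) (Function.update θ i t)) 0 (θ i) := by
  -- On the torus every coupling term carries a factor `I j - I i` or `I j + I k - 2 I i`,
  -- so `H` does not depend on the angles there.
  have h_angle_free : ∀ θ', H (fun _ => c) θ' = ∑ j, ω j * c := fun θ' => by
    simp [hH, show c + c - 2 * c = 0 by ring]
  simp only [h_angle_free]
  exact hasDerivAt_const _ _

/-- Every torus `T_c` (`c > 0`) is invariant under the Hamiltonian flow of the
higher-order Hamiltonian: on `I ≡ c`, the partial derivative `∂H/∂θ_i` vanishes for all `i`. -/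
theorem torus_invariant_higher_order
    (N : ℕ) (hN : 1 ≤ N) (ω : Fin N → ℝ) (K1 K2 : ℝ) (hK1 : 0 ≤ K1) (hK2 : 0 ≤ K2)
    (A : Fin N → Fin N → ℝ) (B : Fin N → Fin N → Fin N → ℝ)
    (hA01 : ∀ i j, A i j = 0 ∨ A i j = 1)
    (hAsymm : ∀ i j, A i j = A j i)
    (hAdiag : ∀ i, A i i = 0)
    (hB01 : ∀ i j k, B i j k = 0 ∨ B i j k = 1)
    (hBperm : ∀ i j k, B i j k = B j i k ∧ B i j k = B i k j)
    (hBdist : ∀ i j k, (i = j ∨ j = k ∨ i = k) → B i j k = 0)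
    (H : (Fin N → ℝ) → (Fin N → ℝ) → ℝ)
    (hH : ∀ I θ, H I θ =
      (∑ i, ω i * I i)
      - K1 / (N : ℝ) * ∑ i, ∑ j, A i j * Real.sqrt (I i * I j) * (I j - I i)
          * Real.sin (θ j - θ i)
      - K2 / (N : ℝ) ^ 2 * ∑ i, ∑ j, ∑ k, B i j k * (I i * I j * I k) ^ ((1 : ℝ) / 3)
          * (I j + I k - 2 * I i) * Real.sin (θ j + θ k - 2 * θ i))
    (c : ℝ) (hc : 0 < c) (θ : Fin N → ℝ) (i : Fin N) :
    HasDerivAt (fun t => H (fun _ => c) (Function.update θ i t)) 0 (θ i) :=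
  torus_invariant_higher_order_general N ω K1 K2 A B H hH c θ i
end

section
/- For the Hamiltonian H(I,θ) = Σ_i ω_i I_i − (K_1/N) Σ_{i,j} A_{ij} √(I_i I_j)(I_j − I_i) sin(θ_j − θ_i) − (K_2/N²) Σ_{i,j,k} B_{ijk} (I_i I_j I_k)^{1/3}(I_j + I_k − 2I_i) sin(θ_j + θ_k − 2θ_i), setting I_i = 1/2 for all i, the angle dynamics θ̇_i = ∂H/∂I_i evaluated at I = (1/2,…,1/2) equals ω_i + (K_1/N) Σ_j A_{ij} sin(θ_j − θ_i) + (K_2/N²) Σ_{j,k} B_{ijk} [sin(θ_j + θ_k − 2θ_i) + sin(2θ_j − θ_k − θ_i)]. -/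
/-!
On the torus `I ≡ c` every coupling weight `I_j - I_i` and `I_j + I_k - 2 I_i` vanishes, so by the
product rule only the derivative of the weight survives, multiplied by the amplitude at the torus,
`√(c·c) = (c·c·c)^(1/3) = c`. For `∂/∂I_i` this leaves sums of the form
`Σ A_{jk} (δ_{ik} - δ_{ij}) sin(θ_k - θ_j)`, and the symmetries of `A` and `B` (with `sin` odd)
fold every term onto the index `i`.
-/

open Real Finset

theorem DifferentiableAt.hasDerivAt_mul_of_eq_zero {f g : ℝ → ℝ} {g' x : ℝ}
    (hf : DifferentiableAt ℝ f x) (hg : HasDerivAt g g' x) (hgx : g x = 0) :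
    HasDerivAt (fun t => f t * g t) (f x * g') x := by
  simpa [hgx] using hf.hasDerivAt.fun_mul hg

theorem rpow_one_third_mul_self_mul_self {c : ℝ} (hc : 0 ≤ c) :
    (c * c * c) ^ ((1 : ℝ) / 3) = c := by
  rw [show c * c * c = c ^ 3 by ring, one_div]
  exact_mod_cast Real.pow_rpow_inv_natCast hc three_ne_zero

section TorusDerivative

variable {ι : Type*} {I : ℝ → ι → ℝ} {I' : ι → ℝ} {x c : ℝ}

theorem hasDerivAt_pairwise_term (hI : ∀ j, HasDerivAt (fun t => I t j) (I' j) x)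
    (hIx : ∀ j, I x j = c) (hc : 0 < c) (w s : ℝ) (j k : ι) :
    HasDerivAt (fun t => w * √(I t j * I t k) * (I t k - I t j) * s)
      (w * c * (I' k - I' j) * s) x := by
  have hamp : DifferentiableAt ℝ (fun t => w * √(I t j * I t k)) x :=
    (((hI j).differentiableAt.fun_mul (hI k).differentiableAt).sqrt
      (by rw [hIx, hIx]; positivity)).const_mul w
  have := (hamp.hasDerivAt_mul_of_eq_zero ((hI k).sub (hI j)) (by simp [hIx])).mul_const s
  rwa [hIx, hIx, Real.sqrt_mul_self hc.le] at this

theorem hasDerivAt_triadic_term (hI : ∀ j, HasDerivAt (fun t => I t j) (I' j) x)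
    (hIx : ∀ j, I x j = c) (hc : 0 < c) (w s : ℝ) (j k l : ι) :
    HasDerivAt (fun t => w * (I t j * I t k * I t l) ^ ((1 : ℝ) / 3)
        * (I t k + I t l - 2 * I t j) * s)
      (w * c * (I' k + I' l - 2 * I' j) * s) x := by
  have hamp : DifferentiableAt ℝ (fun t => w * (I t j * I t k * I t l) ^ ((1 : ℝ) / 3)) x :=
    ((((hI j).differentiableAt.fun_mul (hI k).differentiableAt).fun_mul
      (hI l).differentiableAt).rpow_const (Or.inl (by rw [hIx, hIx, hIx]; positivity))).const_mul w
  have hweight := ((hI k).add (hI l)).sub ((hI j).const_mul 2)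
  have := (hamp.hasDerivAt_mul_of_eq_zero hweight (by simp [hIx]; ring)).mul_const s
  rwa [hIx, hIx, hIx, rpow_one_third_mul_self_mul_self hc.le] at this

variable [Fintype ι]

theorem hasDerivAt_pairwise_coupling (hI : ∀ j, HasDerivAt (fun t => I t j) (I' j) x)
    (hIx : ∀ j, I x j = c) (hc : 0 < c) (A : ι → ι → ℝ) (θ : ι → ℝ) :
    HasDerivAt (fun t => ∑ j, ∑ k, A j k * √(I t j * I t k) * (I t k - I t j) * sin (θ k - θ j))
      (c * ∑ j, ∑ k, A j k * (I' k - I' j) * sin (θ k - θ j)) x := by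
  refine (HasDerivAt.fun_sum fun j _ => HasDerivAt.fun_sum fun k _ =>
    hasDerivAt_pairwise_term hI hIx hc (A j k) (sin (θ k - θ j)) j k).congr_deriv ?_
  simp only [mul_sum]
  exact sum_congr rfl fun j _ => sum_congr rfl fun k _ => by ring

theorem hasDerivAt_triadic_coupling (hI : ∀ j, HasDerivAt (fun t => I t j) (I' j) x)
    (hIx : ∀ j, I x j = c) (hc : 0 < c) (B : ι → ι → ι → ℝ) (θ : ι → ℝ) :
    HasDerivAt (fun t => ∑ j, ∑ k, ∑ l, B j k l * (I t j * I t k * I t l) ^ ((1 : ℝ) / 3)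
        * (I t k + I t l - 2 * I t j) * sin (θ k + θ l - 2 * θ j))
      (c * ∑ j, ∑ k, ∑ l, B j k l * (I' k + I' l - 2 * I' j) * sin (θ k + θ l - 2 * θ j)) x := by
  refine (HasDerivAt.fun_sum fun j _ => HasDerivAt.fun_sum fun k _ => HasDerivAt.fun_sum fun l _ =>
    hasDerivAt_triadic_term hI hIx hc (B j k l) (sin (θ k + θ l - 2 * θ j)) j k l).congr_deriv ?_
  simp only [mul_sum]
  exact sum_congr rfl fun j _ => sum_congr rfl fun k _ => sum_congr rfl fun l _ => by ring

end TorusDerivative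

section SymmetricSums

variable {ι : Type*} [Fintype ι]

theorem sum_sum_mul_sub_mul_sin_sub {A : ι → ι → ℝ} (hA : ∀ j k, A j k = A k j) (v θ : ι → ℝ) :
    ∑ j, ∑ k, A j k * (v k - v j) * sin (θ k - θ j)
      = -2 * ∑ j, v j * ∑ k, A j k * sin (θ k - θ j) := by
  have hswap : ∑ j, ∑ k, A j k * v k * sin (θ k - θ j)
      = -∑ j, ∑ k, A j k * v j * sin (θ k - θ j) := by
    rw [sum_comm, ← sum_neg_distrib]
    refine sum_congr rfl fun j _ => ?_
    rw [← sum_neg_distrib]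
    refine sum_congr rfl fun k _ => ?_
    rw [hA k j, ← neg_sub (θ k) (θ j), sin_neg]
    ring
  calc ∑ j, ∑ k, A j k * (v k - v j) * sin (θ k - θ j)
      = ∑ j, ∑ k, A j k * v k * sin (θ k - θ j) - ∑ j, ∑ k, A j k * v j * sin (θ k - θ j) := by
        simp only [← sum_sub_distrib]
        exact sum_congr rfl fun j _ => sum_congr rfl fun k _ => by ring
    _ = -2 * ∑ j, v j * ∑ k, A j k * sin (θ k - θ j) := by
        rw [hswap]
        simp only [mul_sum, ← sum_neg_distrib, ← sum_sub_distrib]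
        exact sum_congr rfl fun j _ => sum_congr rfl fun k _ => by ring

theorem sum_sum_sum_mul_add_sub_mul_sin {B : ι → ι → ι → ℝ}
    (hB : ∀ j k l, B j k l = B k j l ∧ B j k l = B j l k) (v θ : ι → ℝ) :
    ∑ j, ∑ k, ∑ l, B j k l * (v k + v l - 2 * v j) * sin (θ k + θ l - 2 * θ j)
      = -2 * ∑ j, v j * ∑ k, ∑ l, B j k l *
          (sin (θ k + θ l - 2 * θ j) + sin (2 * θ k - θ l - θ j)) := by
  have hk : ∑ j, ∑ k, ∑ l, B j k l * v k * sin (θ k + θ l - 2 * θ j)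
      = -∑ j, ∑ k, ∑ l, B j k l * v j * sin (2 * θ k - θ l - θ j) := by
    rw [sum_comm]
    simp only [← sum_neg_distrib]
    refine sum_congr rfl fun j _ => sum_congr rfl fun k _ => sum_congr rfl fun l _ => ?_
    rw [(hB k j l).1, show θ j + θ l - 2 * θ k = -(2 * θ k - θ l - θ j) by ring, sin_neg]
    ring
  have hl : ∑ j, ∑ k, ∑ l, B j k l * v l * sin (θ k + θ l - 2 * θ j)
      = -∑ j, ∑ k, ∑ l, B j k l * v j * sin (2 * θ k - θ l - θ j) := by
    rw [sum_congr rfl fun j _ => sum_comm, sum_comm]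
    simp only [← sum_neg_distrib]
    refine sum_congr rfl fun j _ => sum_congr rfl fun k _ => sum_congr rfl fun l _ => ?_
    rw [(hB k l j).2, (hB k j l).1, show θ l + θ j - 2 * θ k = -(2 * θ k - θ l - θ j) by ring,
      sin_neg]
    ring
  calc ∑ j, ∑ k, ∑ l, B j k l * (v k + v l - 2 * v j) * sin (θ k + θ l - 2 * θ j)
      = ∑ j, ∑ k, ∑ l, B j k l * v k * sin (θ k + θ l - 2 * θ j)
        + ∑ j, ∑ k, ∑ l, B j k l * v l * sin (θ k + θ l - 2 * θ j)
        - 2 * ∑ j, ∑ k, ∑ l, B j k l * v j * sin (θ k + θ l - 2 * θ j) := by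
        simp only [mul_sum, ← sum_add_distrib, ← sum_sub_distrib]
        exact sum_congr rfl fun j _ => sum_congr rfl fun k _ => sum_congr rfl fun l _ => by ring
    _ = -2 * ∑ j, v j * ∑ k, ∑ l, B j k l *
          (sin (θ k + θ l - 2 * θ j) + sin (2 * θ k - θ l - θ j)) := by
        rw [hk, hl]
        simp only [mul_sum, ← sum_neg_distrib, ← sum_add_distrib, ← sum_sub_distrib]
        exact sum_congr rfl fun j _ => sum_congr rfl fun k _ => sum_congr rfl fun l _ => by ring

end SymmetricSums

theorem torus_restriction_is_HOKM_general
    (N : ℕ) (ω : Fin N → ℝ) (K1 K2 : ℝ)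
    (A : Fin N → Fin N → ℝ) (B : Fin N → Fin N → Fin N → ℝ)
    (hAsymm : ∀ i j, A i j = A j i)
    (hBperm : ∀ i j k, B i j k = B j i k ∧ B i j k = B i k j)
    (H : (Fin N → ℝ) → (Fin N → ℝ) → ℝ)
    (hH : ∀ I θ, H I θ =
      (∑ i, ω i * I i)
      - K1 / (N : ℝ) * ∑ i, ∑ j, A i j * Real.sqrt (I i * I j) * (I j - I i)
          * Real.sin (θ j - θ i)
      - K2 / (N : ℝ) ^ 2 * ∑ i, ∑ j, ∑ k, B i j k * (I i * I j * I k) ^ ((1 : ℝ) / 3)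
          * (I j + I k - 2 * I i) * Real.sin (θ j + θ k - 2 * θ i))
    (θ : Fin N → ℝ) (i : Fin N) :
    HasDerivAt (fun t => H (Function.update (fun _ : Fin N => (1 / 2 : ℝ)) i t) θ)
      (ω i
        + K1 / (N : ℝ) * ∑ j, A i j * Real.sin (θ j - θ i)
        + K2 / (N : ℝ) ^ 2 * ∑ j, ∑ k, B i j k *
            (Real.sin (θ j + θ k - 2 * θ i) + Real.sin (2 * θ j - θ k - θ i)))
      (1 / 2) := by
  let I := Function.update (fun _ : Fin N => (1 / 2 : ℝ)) i
  have hupdate : HasDerivAt I (Pi.single i 1) (1 / 2) := hasDerivAt_update _ i _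
  have hI := hasDerivAt_pi.1 hupdate
  have hIx : ∀ j, I (1 / 2) j = 1 / 2 := fun j => by simp [I]
  have hlin := HasDerivAt.fun_sum (u := univ) fun j _ => (hI j).const_mul (ω j)
  simp only [hH]
  refine ((hlin.sub ((hasDerivAt_pairwise_coupling hI hIx one_half_pos A θ).const_mul _)).sub
    ((hasDerivAt_triadic_coupling hI hIx one_half_pos B θ).const_mul _)).congr_deriv ?_
  rw [sum_sum_mul_sub_mul_sin_sub hAsymm, sum_sum_sum_mul_add_sub_mul_sin hBperm]
  simp [Pi.single_apply]

/-- On the invariant torus `I ≡ 1/2`, the angle dynamics `θ̇_i = ∂H/∂I_i` of the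
higher-order Hamiltonian reproduces the higher-order Kuramoto model. -/
theorem torus_restriction_is_HOKM
    (N : ℕ) (hN : 1 ≤ N) (ω : Fin N → ℝ) (K1 K2 : ℝ) (hK1 : 0 ≤ K1) (hK2 : 0 ≤ K2)
    (A : Fin N → Fin N → ℝ) (B : Fin N → Fin N → Fin N → ℝ)
    (hA01 : ∀ i j, A i j = 0 ∨ A i j = 1)
    (hAsymm : ∀ i j, A i j = A j i)
    (hAdiag : ∀ i, A i i = 0)
    (hB01 : ∀ i j k, B i j k = 0 ∨ B i j k = 1)
    (hBperm : ∀ i j k, B i j k = B j i k ∧ B i j k = B i k j)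
    (hBdist : ∀ i j k, (i = j ∨ j = k ∨ i = k) → B i j k = 0)
    (H : (Fin N → ℝ) → (Fin N → ℝ) → ℝ)
    (hH : ∀ I θ, H I θ =
      (∑ i, ω i * I i)
      - K1 / (N : ℝ) * ∑ i, ∑ j, A i j * Real.sqrt (I i * I j) * (I j - I i)
          * Real.sin (θ j - θ i)
      - K2 / (N : ℝ) ^ 2 * ∑ i, ∑ j, ∑ k, B i j k * (I i * I j * I k) ^ ((1 : ℝ) / 3)
          * (I j + I k - 2 * I i) * Real.sin (θ j + θ k - 2 * θ i))
    (θ : Fin N → ℝ) (i : Fin N) :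
    HasDerivAt (fun t => H (Function.update (fun _ : Fin N => (1 / 2 : ℝ)) i t) θ)
      (ω i
        + K1 / (N : ℝ) * ∑ j, A i j * Real.sin (θ j - θ i)
        + K2 / (N : ℝ) ^ 2 * ∑ j, ∑ k, B i j k *
            (Real.sin (θ j + θ k - 2 * θ i) + Real.sin (2 * θ j - θ k - θ i)))
      (1 / 2) :=
  torus_restriction_is_HOKM_general N ω K1 K2 A B hAsymm hBperm H hH θ i
end

section
/- For the pairwise Hamiltonian H(I,θ) = Σ_i ω_i I_i − (K_1/N) Σ_{i,j} A_{ij} √(I_i I_j)(I_j − I_i) sin(θ_j − θ_i), the restriction of the angle dynamics θ̇_i = ∂H/∂I_i to the invariant torus I_i = c for all i (c > 0) gives θ̇_i = ω_i + (2cK_1/N) Σ_j A_{ij} sin(θ_j − θ_i), i.e., the classical Kuramoto model with rescaled coupling strength 2cK_1. -/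
/-!
Only the coupling term depends on the interplay of the actions. Each of its summands is
`√(I_k I_j) (I_j - I_k)` times a constant, and on the torus `I ≡ c` the factor `I_j - I_k`
vanishes, so by the product rule its `I_i`-derivative there is `√(c·c) = c` times the
derivative of `I_j - I_k`. Summing over all pairs, the terms with `j = i` and with `k = i`
contribute equally because `A_{kj} sin(θ_j - θ_k)` is antisymmetric, which produces the
factor `2c`.
-/

open Finset

theorem HasDerivAt.mul_of_eq_zero_right {f g : ℝ → ℝ} {f' g' x : ℝ}
    (hf : HasDerivAt f f' x) (hg : HasDerivAt g g' x) (hgx : g x = 0) :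
    HasDerivAt (fun t => f t * g t) (f x * g') x := by
  simpa [hgx] using hf.fun_mul hg

theorem hasDerivAt_sqrt_mul_mul_sub {a b : ℝ → ℝ} {a' b' x c : ℝ}
    (ha : HasDerivAt a a' x) (hb : HasDerivAt b b' x) (hax : a x = c) (hbx : b x = c)
    (hc : 0 < c) :
    HasDerivAt (fun t => Real.sqrt (a t * b t) * (b t - a t)) (c * (b' - a')) x := by
  have hsqrt := (ha.fun_mul hb).sqrt (by rw [hax, hbx]; positivity)
  have := hsqrt.mul_of_eq_zero_right (hb.sub ha) (by simp [hax, hbx])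
  simpa [hax, hbx, Real.sqrt_mul_self hc.le] using this

section

variable {ι : Type*} [DecidableEq ι]

theorem sum_sum_mul_single_sub_single_of_antisymm [Fintype ι] {s : ι → ι → ℝ}
    (hs : ∀ k j, s j k = -s k j) (i : ι) :
    ∑ k, ∑ j, s k j * ((Pi.single i 1 : ι → ℝ) j - (Pi.single i 1 : ι → ℝ) k)
      = -2 * ∑ j, s i j := by
  simp only [mul_sub, sum_sub_distrib, Pi.single_apply, mul_ite, mul_one, mul_zero,
    sum_ite_eq', mem_univ, if_true]
  rw [sum_comm]
  simp only [sum_ite_eq', mem_univ, if_true, hs i, sum_neg_distrib]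
  ring

theorem hasDerivAt_update_apply (x : ι → ℝ) (i k : ι) (y : ℝ) :
    HasDerivAt (fun t => Function.update x i t k) ((Pi.single i 1 : ι → ℝ) k) y :=
  hasDerivAt_pi.mp (hasDerivAt_update x i y) k

theorem hasDerivAt_sum_mul_update [Fintype ι] (ω x : ι → ℝ) (i : ι) (y : ℝ) :
    HasDerivAt (fun t => ∑ k, ω k * Function.update x i t k) (ω i) y := by
  have := HasDerivAt.fun_sum fun k (_ : k ∈ univ) =>
    (hasDerivAt_update_apply x i k y).const_mul (ω k)
  simpa [Pi.single_apply] using this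

theorem hasDerivAt_pairwise_coupling_update_const [Fintype ι] {A : ι → ι → ℝ}
    (hA : ∀ k j, A k j = A j k) (θ : ι → ℝ) {c : ℝ} (hc : 0 < c) (i : ι) :
    HasDerivAt (fun t => ∑ k, ∑ j, A k j
        * Real.sqrt (Function.update (fun _ => c) i t k * Function.update (fun _ => c) i t j)
        * (Function.update (fun _ => c) i t j - Function.update (fun _ => c) i t k)
        * Real.sin (θ j - θ k))
      (-2 * c * ∑ j, A i j * Real.sin (θ j - θ i)) c := by
  have hterm : ∀ k j, HasDerivAt (fun t => A k j
        * (Real.sqrt (Function.update (fun _ => c) i t k * Function.update (fun _ => c) i t j)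
          * (Function.update (fun _ => c) i t j - Function.update (fun _ => c) i t k))
        * Real.sin (θ j - θ k))
      (A k j * (c * ((Pi.single i 1 : ι → ℝ) j - (Pi.single i 1 : ι → ℝ) k))
        * Real.sin (θ j - θ k)) c := fun k j =>
    ((hasDerivAt_sqrt_mul_mul_sub (hasDerivAt_update_apply _ i k c)
      (hasDerivAt_update_apply _ i j c) (by simp) (by simp) hc).const_mul _).mul_const _
  have hsum := HasDerivAt.fun_sum fun k (_ : k ∈ univ) =>
    HasDerivAt.fun_sum fun j (_ : j ∈ univ) => hterm k j
  have hanti : ∀ k j, A j k * Real.sin (θ k - θ j) = -(A k j * Real.sin (θ j - θ k)) := by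
    intro k j
    rw [hA j k, ← neg_sub (θ j), Real.sin_neg, mul_neg]
  refine (hsum.congr_deriv ?_).congr_of_eventuallyEq (.of_forall fun t => ?_)
  · rw [mul_comm (-2), mul_assoc, ← sum_sum_mul_single_sub_single_of_antisymm hanti i, mul_sum]
    exact sum_congr rfl fun k _ => by rw [mul_sum]; exact sum_congr rfl fun j _ => by ring
  · exact sum_congr rfl fun k _ => sum_congr rfl fun j _ => by ring

end

theorem pairwise_torus_restriction_is_Kuramoto_general
    (N : ℕ) (ω : Fin N → ℝ) (K1 : ℝ)
    (A : Fin N → Fin N → ℝ)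
    (hAsymm : ∀ i j, A i j = A j i)
    (H : (Fin N → ℝ) → (Fin N → ℝ) → ℝ)
    (hH : ∀ I θ, H I θ =
      (∑ i, ω i * I i)
      - K1 / (N : ℝ) * ∑ i, ∑ j, A i j * Real.sqrt (I i * I j) * (I j - I i)
          * Real.sin (θ j - θ i))
    (c : ℝ) (hc : 0 < c) (θ : Fin N → ℝ) (i : Fin N) :
    HasDerivAt (fun t => H (Function.update (fun _ : Fin N => c) i t) θ)
      (ω i + 2 * c * K1 / (N : ℝ) * ∑ j, A i j * Real.sin (θ j - θ i)) c := by
  simp only [hH]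
  have hlinear := hasDerivAt_sum_mul_update ω (fun _ => c) i c
  have hcoupling := (hasDerivAt_pairwise_coupling_update_const hAsymm θ hc i).const_mul
    (K1 / (N : ℝ))
  exact (hlinear.sub hcoupling).congr_deriv (by ring)

/-- The restriction of the pairwise Hamiltonian angle dynamics to the invariant
torus `I ≡ c` gives the classical Kuramoto model with rescaled coupling strength `2cK₁`. -/
theorem pairwise_torus_restriction_is_Kuramoto
    (N : ℕ) (hN : 1 ≤ N) (ω : Fin N → ℝ) (K1 : ℝ) (hK1 : 0 ≤ K1)
    (A : Fin N → Fin N → ℝ)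
    (hA01 : ∀ i j, A i j = 0 ∨ A i j = 1)
    (hAsymm : ∀ i j, A i j = A j i)
    (hAdiag : ∀ i, A i i = 0)
    (H : (Fin N → ℝ) → (Fin N → ℝ) → ℝ)
    (hH : ∀ I θ, H I θ =
      (∑ i, ω i * I i)
      - K1 / (N : ℝ) * ∑ i, ∑ j, A i j * Real.sqrt (I i * I j) * (I j - I i)
          * Real.sin (θ j - θ i))
    (c : ℝ) (hc : 0 < c) (θ : Fin N → ℝ) (i : Fin N) :
    HasDerivAt (fun t => H (Function.update (fun _ : Fin N => c) i t) θ)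
      (ω i + 2 * c * K1 / (N : ℝ) * ∑ j, A i j * Real.sin (θ j - θ i)) c :=
  pairwise_torus_restriction_is_Kuramoto_general N ω K1 A hAsymm H hH c hc θ i
end
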